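/- For every integer n ≥ 9, the quantity s_n = (∑_{k=1}^{n−2} 1/k) + 13/(12(n−1)) + 5/(12n) − ln n satisfies s_n − γ < 1/(12n³) + 13/(120n⁴). -/

import Mathlib

/-!
Put `t n = s n - (1 / (12 n³) + 13 / (120 n⁴))`. Since `t n → γ`, it suffices that `t` is
strictly increasing from `n = 9` on. The increment `t (n + 1) - t n` is a rational function of `n`
minus `log (1 + 1/n)`; bounding the logarithm by its Taylor polynomial of degree 6 with the
geometric remainder leaves a rational function whose numerator has positive coefficients in
powers of `n - 9`.
-/

noncomputable def s (n : ℕ) : ℝ :=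
  (∑ k ∈ Finset.Icc 1 (n - 2), (1 : ℝ) / k) + 13 / (12 * ((n : ℝ) - 1)) + 5 / (12 * n)
    - Real.log n

open Real Filter Topology

noncomputable def errorBound (x : ℝ) : ℝ := 1 / (12 * x ^ 3) + 13 / (120 * x ^ 4)

noncomputable def harmonicCorrection (x : ℝ) : ℝ :=
  1 / (12 * (x - 1)) - 7 / (12 * x) - errorBound x

lemma log_one_add_le_taylor {y : ℝ} (hy0 : 0 ≤ y) (hy1 : y < 1) :
    log (1 + y) ≤
      y - y ^ 2 / 2 + y ^ 3 / 3 - y ^ 4 / 4 + y ^ 5 / 5 - y ^ 6 / 6 + y ^ 7 / (1 - y) := by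
  have hy : |-y| < 1 := by rwa [abs_neg, abs_of_nonneg hy0]
  have h := (abs_le.mp (abs_log_sub_add_sum_range_le hy 6)).2
  simp only [Finset.sum_range_succ, Finset.sum_range_zero, abs_neg, abs_of_nonneg hy0,
    sub_neg_eq_add] at h
  linarith

lemma log_succ_sub_log_lt {x : ℝ} (hx : 9 ≤ x) :
    log (x + 1) - log x < 1 / (x + 1) + harmonicCorrection (x + 1) - harmonicCorrection x := by
  have hx0 : 0 < x := by linarith
  have hlog : log (x + 1) - log x = log (1 + 1 / x) := by
    rw [← log_div (by positivity) hx0.ne']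
    congr 1
    field_simp
  have htaylor :=
    log_one_add_le_taylor (y := 1 / x) (by positivity) ((div_lt_one hx0).mpr (by linarith))
  have hx1 : 0 < x - 1 := by linarith
  have hgap : 1 / (x + 1) + harmonicCorrection (x + 1) - harmonicCorrection x
        - (1 / x - (1 / x) ^ 2 / 2 + (1 / x) ^ 3 / 3 - (1 / x) ^ 4 / 4 + (1 / x) ^ 5 / 5
          - (1 / x) ^ 6 / 6 + (1 / x) ^ 7 / (1 - 1 / x))
      = (8 * (x - 9) ^ 6 + 386 * (x - 9) ^ 5 + 7486 * (x - 9) ^ 4 + 72985 * (x - 9) ^ 3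
          + 358288 * (x - 9) ^ 2 + 714111 * (x - 9) + 37336)
        / (120 * x ^ 6 * (x - 1) * (x + 1) ^ 4) := by
    rw [one_sub_div hx0.ne']
    simp only [harmonicCorrection, errorBound, add_sub_cancel_right]
    field_simp
    ring
  have hx9 : 0 ≤ x - 9 := by linarith
  refine (hlog ▸ htaylor).trans_lt ?_
  rw [← sub_pos, hgap]
  positivity

lemma s_sub_errorBound_eq {n : ℕ} (hn : 2 ≤ n) :
    s n - errorBound n = harmonic n - log n + harmonicCorrection n := by
  obtain ⟨m, rfl⟩ : ∃ m, n = m + 2 := ⟨n - 2, by omega⟩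
  simp only [s, harmonicCorrection, harmonic_succ, harmonic_eq_sum_Icc, Nat.add_sub_cancel]
  push_cast
  rw [show (m : ℝ) + 2 - 1 = m + 1 by ring]
  field_simp
  ring

lemma s_sub_errorBound_lt_succ {n : ℕ} (hn : 9 ≤ n) :
    s n - errorBound n < s (n + 1) - errorBound ↑(n + 1) := by
  have hx : (9 : ℝ) ≤ n := by exact_mod_cast hn
  have hlog := log_succ_sub_log_lt hx
  rw [s_sub_errorBound_eq (by omega), s_sub_errorBound_eq (by omega), harmonic_succ]
  push_cast
  rw [one_div] at hlog
  linarith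

lemma tendsto_const_div_mul_pow_atTop (c : ℝ) {a : ℝ} (ha : 0 < a) {k : ℕ} (hk : k ≠ 0) :
    Tendsto (fun x : ℝ => c / (a * x ^ k)) atTop (𝓝 0) :=
  tendsto_const_nhds.div_atTop ((tendsto_pow_atTop hk).const_mul_atTop ha)

lemma tendsto_harmonicCorrection : Tendsto harmonicCorrection atTop (𝓝 0) := by
  have hpole : Tendsto (fun x : ℝ => 1 / (12 * (x - 1))) atTop (𝓝 0) :=
    tendsto_const_nhds.div_atTop
      ((tendsto_atTop_add_const_right _ (-1) tendsto_id).const_mul_atTop (by norm_num))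
  have h := (hpole.sub
      (tendsto_const_div_mul_pow_atTop 7 (by norm_num : (0 : ℝ) < 12) one_ne_zero)).sub
    ((tendsto_const_div_mul_pow_atTop 1 (by norm_num : (0 : ℝ) < 12) three_ne_zero).add
      (tendsto_const_div_mul_pow_atTop 13 (by norm_num : (0 : ℝ) < 120) four_ne_zero))
  convert h using 1
  · funext x
    simp only [harmonicCorrection, errorBound, pow_one]
  · norm_num

lemma tendsto_s_sub_errorBound :
    Tendsto (fun n : ℕ => s n - errorBound n) atTop (𝓝 eulerMascheroniConstant) := by
  have h := tendsto_harmonic_sub_log.add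
    (tendsto_harmonicCorrection.comp tendsto_natCast_atTop_atTop)
  rw [add_zero] at h
  refine h.congr' ?_
  filter_upwards [eventually_ge_atTop 2] with n hn
  exact (s_sub_errorBound_eq hn).symm

lemma s_sub_errorBound_le {n : ℕ} (hn : 9 ≤ n) :
    s n - errorBound n ≤ eulerMascheroniConstant := by
  have hmono : Monotone fun m => s (m + n) - errorBound ↑(m + n) :=
    monotone_nat_of_le_succ fun m => by
      simpa only [Nat.succ_add] using (s_sub_errorBound_lt_succ (n := m + n) (by omega)).le
  simpa only [zero_add] using
    hmono.ge_of_tendsto ((tendsto_add_atTop_iff_nat n).mpr tendsto_s_sub_errorBound) 0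

theorem upper_bound (n : ℕ) (hn : 9 ≤ n) :
    s n - Real.eulerMascheroniConstant
      < 1 / (12 * (n : ℝ) ^ 3) + 13 / (120 * (n : ℝ) ^ 4) := by
  have h := (s_sub_errorBound_lt_succ hn).trans_le (s_sub_errorBound_le (by omega))
  rw [errorBound] at h
  linarith
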